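/- arXiv:1707.07468 — 2 statements merged into one kernel-verified Lean document; each statement's English description precedes it below -/
import Mathlib

section
/- Let G be a finite p-group and let IG denote the augmentation ideal of the group algebra F_p[G]. Then IG is nilpotent: there exists N ∈ ℕ such that IG^N = 0. -/
open MonoidAlgebra

/-- The augmentation map of the group algebra `F_p[G]`, sending each group element to `1`. -/
noncomputable def augmentation (p : ℕ) (G : Type*) [Group G] :
    MonoidAlgebra (ZMod p) G →ₐ[ZMod p] ZMod p :=
  MonoidAlgebra.lift (ZMod p) (ZMod p) G 1

/-- The augmentation ideal `IG`, the kernel of the augmentation map. -/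
noncomputable def augmentationIdeal (p : ℕ) (G : Type*) [Group G] :
    Ideal (MonoidAlgebra (ZMod p) G) :=
  RingHom.ker (augmentation p G).toRingHom

/-! A `p`-group acting linearly on a nonzero finite `F_p`-vector space fixes a nonzero vector,
because the number of fixed points is congruent mod `p` to the order of the space. In a simple
`F_p[G]`-module such a vector generates everything, and `F_p[G]` acts on it through the
augmentation; so `IG` annihilates every simple module, i.e. lies in every maximal left ideal,
hence in the Jacobson radical. Since `F_p[G]` is finite-dimensional it is Artinian, and the
Jacobson radical of an Artinian ring is nilpotent. -/

theorem mem_augmentationIdeal {p : ℕ} {G : Type*} [Group G] {x : (ZMod p)[G]} :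
    x ∈ augmentationIdeal p G ↔ augmentation p G x = 0 :=
  Iff.rfl

theorem IsPGroup.exists_fixed_point_ne_zero {p : ℕ} [Fact p.Prime] {G V : Type*} [Group G]
    (hG : IsPGroup p G) [AddCommGroup V] [Module (ZMod p) V] [Finite V] [Nontrivial V]
    [DistribMulAction G V] : ∃ v : V, v ≠ 0 ∧ ∀ g : G, g • v = v := by
  obtain ⟨v, hv⟩ := exists_ne (0 : V)
  have hpv : p • v = 0 := by
    rw [← Nat.cast_smul_eq_nsmul (ZMod p), ZMod.natCast_self, zero_smul]
  have hpV : p ∣ Nat.card V := addOrderOf_eq_prime hpv hv ▸ addOrderOf_dvd_natCard v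
  obtain ⟨w, hw, hne⟩ :=
    hG.exists_fixed_point_of_prime_dvd_card_of_fixed_point V hpV (a := 0) (smul_zero ·)
  exact ⟨w, hne.symm, hw⟩

section

variable {p : ℕ} {G V : Type*} [Group G] [AddCommGroup V] [Module (ZMod p)[G] V]
  [Module (ZMod p) V] [IsScalarTower (ZMod p) (ZMod p)[G] V]

theorem smul_eq_augmentation_smul {v : V} (hv : ∀ g : G, of (ZMod p) G g • v = v)
    (x : (ZMod p)[G]) : x • v = augmentation p G x • v := by
  induction x using MonoidAlgebra.induction_on with
  | of g => rw [hv, augmentation, lift_of, MonoidHom.one_apply, one_smul]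
  | add x y hx hy => rw [add_smul, hx, hy, map_add, add_smul]
  | smul c x hx => rw [smul_assoc, hx, map_smul, smul_eq_mul, mul_smul]

theorem augmentationIdeal_smul_eq_zero [Fact p.Prime] (hG : IsPGroup p G)
    [IsSimpleModule (ZMod p)[G] V] [Finite V] {x : (ZMod p)[G]}
    (hx : x ∈ augmentationIdeal p G) (w : V) : x • w = 0 := by
  let _ : DistribMulAction G V := DistribMulAction.compHom V (of (ZMod p) G)
  have := IsSimpleModule.nontrivial (ZMod p)[G] V
  obtain ⟨v, hv0, hv⟩ := hG.exists_fixed_point_ne_zero (V := V)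
  have hw : w ∈ Submodule.span (ZMod p)[G] {v} := by
    rw [IsSimpleModule.span_singleton_eq_top _ hv0]
    trivial
  obtain ⟨a, rfl⟩ := Submodule.mem_span_singleton.mp hw
  rw [← mul_smul, smul_eq_augmentation_smul (p := p) (G := G) hv, map_mul,
    mem_augmentationIdeal.mp hx, zero_mul, zero_smul]

end

theorem augmentationIdeal_le_of_isMaximal {p : ℕ} [Fact p.Prime] {G : Type*} [Group G]
    [Finite G] (hG : IsPGroup p G) {M : Ideal (ZMod p)[G]} (hM : M.IsMaximal) :
    augmentationIdeal p G ≤ M := by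
  intro x hx
  have := isSimpleModule_iff_isCoatom.mpr hM.out
  have : Finite ((ZMod p)[G] ⧸ M) := Module.finite_of_finite (ZMod p)
  have hx1 := augmentationIdeal_smul_eq_zero hG hx (Submodule.Quotient.mk (p := M) 1)
  rwa [← Submodule.Quotient.mk_smul, smul_eq_mul, mul_one, Submodule.Quotient.mk_eq_zero] at hx1

theorem augmentationIdeal_le_jacobson {p : ℕ} [Fact p.Prime] {G : Type*} [Group G] [Finite G]
    (hG : IsPGroup p G) : augmentationIdeal p G ≤ Ideal.jacobson ⊥ :=
  le_sInf fun _ hM ↦ augmentationIdeal_le_of_isMaximal hG hM.2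

/-- For a finite `p`-group `G`, the augmentation ideal of `F_p[G]` is nilpotent. -/
theorem augmentationIdeal_nilpotent (p : ℕ) [Fact p.Prime] (G : Type*) [Group G] [Finite G]
    (hG : IsPGroup p G) :
    ∃ N : ℕ, (augmentationIdeal p G) ^ N = ⊥ := by
  have := IsArtinianRing.of_finite (ZMod p) (ZMod p)[G]
  obtain ⟨N, hN⟩ := IsArtinianRing.isNilpotent_jacobson_bot (R := (ZMod p)[G])
  exact ⟨N, le_bot_iff.mp
    ((Ideal.pow_right_mono (augmentationIdeal_le_jacobson hG) N).trans hN.le)⟩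
end

section
/- Let F be a constant-free group-valued functor on a pointed symmetric monoidal category. Then cr_n F(c₁,…,c_n) is naturally isomorphic to the kernel of the map F(c₁⊙…⊙c_n) → ∏_{i=1}^n F(c₁⊙…⊙ĉ_i⊙…⊙c_n), where ĉ_i indicates omission of the i-th factor. -/
open CategoryTheory MonoidalCategory Limits

variable {C : Type*} [Category C] [MonoidalCategory C] [SymmetricCategory C]

/-- The iterated tensor product of a list of objects. -/
noncomputable def listTensor : List C → C
  | [] => 𝟙_ C
  | a :: l => a ⊗ listTensor l

/-- The projection `c ⊙ d ⟶ c`, using that the monoidal unit is terminal. -/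
noncomputable def proj₁ (hT : IsTerminal (𝟙_ C)) (c d : C) : c ⊗ d ⟶ c :=
  (c ◁ hT.from d) ≫ (ρ_ c).hom

/-- The projection `c ⊙ d ⟶ d`, using that the monoidal unit is terminal. -/
noncomputable def proj₂ (hT : IsTerminal (𝟙_ C)) (c d : C) : c ⊗ d ⟶ d :=
  (hT.from c ▷ d) ≫ (λ_ d).hom

/-- The `n`-th cross-effect of a group-valued functor `F`, following Baues–Pirashvili:
`cr₁F(c) = ker (F(c) → F(0))`, and recursively
`cr_{n+1}F(c₁,c₂,c₃,…) = cr₂(cr_nF(−,c₃,…))(c₁,c₂)`, realized as a subgroup of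
`F(c₁ ⊙ ⋯ ⊙ c_n)`. -/
noncomputable def crG (hT : IsTerminal (𝟙_ C)) (F : C ⥤ GrpCat) :
    (l : List C) → Subgroup (F.obj (listTensor l))
  | [] => ⊤
  | [c] => (F.map (hT.from (listTensor [c]))).hom.ker
  | c₁ :: c₂ :: rest =>
    (crG hT F ((c₁ ⊗ c₂) :: rest)).comap (F.map (α_ c₁ c₂ (listTensor rest)).inv).hom
    ⊓ (F.map ((α_ c₁ c₂ (listTensor rest)).inv ≫ (proj₁ hT c₁ c₂ ▷ listTensor rest))).hom.ker
    ⊓ (F.map ((α_ c₁ c₂ (listTensor rest)).inv ≫ (proj₂ hT c₁ c₂ ▷ listTensor rest))).hom.ker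
    ⊓ (F.map (hT.from (listTensor (c₁ :: c₂ :: rest)))).hom.ker
  termination_by l => l.length


/-- The morphism `c₁ ⊙ ⋯ ⊙ c_n ⟶ c₁ ⊙ ⋯ ⊙ ĉ_i ⊙ ⋯ ⊙ c_n` omitting the `i`-th factor,
induced by the projection `c_i ⟶ 0`. -/
noncomputable def omitMap (hT : IsTerminal (𝟙_ C)) :
    (l : List C) → (i : Fin l.length) → (listTensor l ⟶ listTensor (l.eraseIdx i))
  | a :: l, ⟨0, _⟩ => (hT.from a ▷ listTensor l) ≫ (λ_ (listTensor l)).hom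
  | a :: l, ⟨i + 1, h⟩ => a ◁ omitMap hT l ⟨i, by simpa using h⟩

/-!
Induct on the number of factors. Since `F(0)` is trivial, membership of `x` in
`cr_{n+1}F(c₁, c₂, c₃, …)` amounts to three conditions: the two `cr₂`-projections, which are
precisely the maps omitting `c₂` and omitting `c₁`, kill `x`, and `α⁻¹ x` lies in
`cr_nF(c₁ ⊙ c₂, c₃, …)`. By induction the last condition says that `α⁻¹ x` dies under every
omission map of `(c₁ ⊙ c₂, c₃, …)`. Up to the associator, omitting `c_j` for `j ≥ 3` is the
same on both sides, and omitting `c₁ ⊙ c₂` factors as omitting `c₁` followed by omitting `c₂`,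
so it is implied by the other conditions.
-/

lemma map_iso_inv_apply_eq_one_iff {D : Type*} [Category D] (F : D ⥤ GrpCat) {X Y : D}
    (e : X ≅ Y) (x : F.obj Y) : F.map e.inv x = 1 ↔ x = 1 :=
  map_eq_one_iff _ (F.mapIso e).symm.groupIsoToMulEquiv.injective

lemma map_apply_map_eq_of_comp_eq {D : Type*} [Category D] (F : D ⥤ GrpCat) {W X Y Z : D}
    {f : W ⟶ X} {g : X ⟶ Z} {h : W ⟶ Y} {k : Y ⟶ Z} (w : f ≫ g = h ≫ k) (x : F.obj W) :
    F.map g (F.map f x) = F.map k (F.map h x) := by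
  simp only [← ConcreteCategory.comp_apply, ← F.map_comp, w]

section
variable {D : Type*} [Category D] [MonoidalCategory D] (hT : IsTerminal (𝟙_ D))

lemma omitMap_cons_zero (a : D) (l : List D) :
    omitMap hT (a :: l) 0 = (hT.from a ▷ listTensor l) ≫ (λ_ (listTensor l)).hom := rfl

lemma omitMap_zero_eq_assoc_inv_comp_proj₂ (c₁ c₂ : D) (l : List D) :
    omitMap hT (c₁ :: c₂ :: l) 0 =
      (α_ c₁ c₂ (listTensor l)).inv ≫ (proj₂ hT c₁ c₂ ▷ listTensor l) := by
  simp [omitMap_cons_zero, listTensor, proj₂]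

lemma omitMap_one_eq_assoc_inv_comp_proj₁ (c₁ c₂ : D) (l : List D) :
    omitMap hT (c₁ :: c₂ :: l) 1 =
      (α_ c₁ c₂ (listTensor l)).inv ≫ (proj₁ hT c₁ c₂ ▷ listTensor l) := by
  change c₁ ◁ (hT.from c₂ ▷ listTensor l ≫ (λ_ (listTensor l)).hom) = _
  simp [proj₁]

lemma assoc_inv_comp_omitMap_tensor_zero (c₁ c₂ : D) (l : List D) :
    (α_ c₁ c₂ (listTensor l)).inv ≫ omitMap hT ((c₁ ⊗ c₂) :: l) 0 =
      omitMap hT (c₁ :: c₂ :: l) 0 ≫ omitMap hT (c₂ :: l) 0 := by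
  rw [omitMap_zero_eq_assoc_inv_comp_proj₂, omitMap_cons_zero, omitMap_cons_zero]
  change (α_ c₁ c₂ (listTensor l)).inv ≫ (hT.from (c₁ ⊗ c₂) ▷ listTensor l ≫ (λ_ _).hom) =
    ((α_ c₁ c₂ (listTensor l)).inv ≫ (proj₂ hT c₁ c₂ ▷ listTensor l)) ≫
      (hT.from c₂ ▷ listTensor l ≫ (λ_ (listTensor l)).hom)
  simp only [Category.assoc, ← comp_whiskerRight_assoc, IsTerminal.comp_from]

lemma assoc_inv_comp_omitMap_tensor_succ (c₁ c₂ : D) (l : List D)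
    (i : Fin l.length) :
    (α_ c₁ c₂ (listTensor l)).inv ≫ omitMap hT ((c₁ ⊗ c₂) :: l) i.succ =
      omitMap hT (c₁ :: c₂ :: l) i.succ.succ ≫ (α_ c₁ c₂ (listTensor (l.eraseIdx i))).inv :=
  (associator_inv_naturality_right c₁ c₂ (omitMap hT l i)).symm

variable (F : D ⥤ GrpCat) {c₁ c₂ : D} {l : List D}
  (x : F.obj (listTensor (c₁ :: c₂ :: l)))

lemma map_omitMap_tensor_zero_eq_one (hx : F.map (omitMap hT (c₁ :: c₂ :: l) 0) x = 1) :
    F.map (omitMap hT ((c₁ ⊗ c₂) :: l) 0) (F.map (α_ c₁ c₂ (listTensor l)).inv x) = 1 :=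
  (map_apply_map_eq_of_comp_eq F (assoc_inv_comp_omitMap_tensor_zero hT c₁ c₂ l) x).trans <|
    (congrArg (F.map (omitMap hT (c₂ :: l) 0) ·) hx).trans (map_one _)

lemma map_omitMap_tensor_succ_eq_one_iff (i : Fin l.length) :
    F.map (omitMap hT ((c₁ ⊗ c₂) :: l) i.succ) (F.map (α_ c₁ c₂ (listTensor l)).inv x) = 1 ↔
      F.map (omitMap hT (c₁ :: c₂ :: l) i.succ.succ) x = 1 :=
  (congrArg (· = 1) (map_apply_map_eq_of_comp_eq F
    (assoc_inv_comp_omitMap_tensor_succ hT c₁ c₂ l i) x)).to_iff.trans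
    (map_iso_inv_apply_eq_one_iff F _ _)

lemma forall_map_omitMap_cons_cons_eq_one_iff :
    (∀ i, F.map (omitMap hT (c₁ :: c₂ :: l) i) x = 1) ↔
      (∀ i, F.map (omitMap hT ((c₁ ⊗ c₂) :: l) i) (F.map (α_ c₁ c₂ (listTensor l)).inv x) = 1) ∧
        F.map (omitMap hT (c₁ :: c₂ :: l) 1) x = 1 ∧
        F.map (omitMap hT (c₁ :: c₂ :: l) 0) x = 1 := by
  constructor
  · intro h
    refine ⟨Fin.cases ?_ fun i => ?_, h 1, h 0⟩
    · exact map_omitMap_tensor_zero_eq_one hT F x (h 0)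
    · exact (map_omitMap_tensor_succ_eq_one_iff hT F x i).2 (h _)
  · rintro ⟨h, h₁, h₀⟩
    rw [← Fin.succ_zero_eq_one] at h₁
    exact Fin.cases h₀ (Fin.cases h₁ fun i => (map_omitMap_tensor_succ_eq_one_iff hT F x i).1 (h _))

lemma mem_crG_cons_cons_iff (hF : ∀ y : F.obj (𝟙_ D), y = 1) :
    x ∈ crG hT F (c₁ :: c₂ :: l) ↔
      F.map (α_ c₁ c₂ (listTensor l)).inv x ∈ crG hT F ((c₁ ⊗ c₂) :: l) ∧
        F.map (omitMap hT (c₁ :: c₂ :: l) 1) x = 1 ∧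
        F.map (omitMap hT (c₁ :: c₂ :: l) 0) x = 1 := by
  rw [crG, omitMap_one_eq_assoc_inv_comp_proj₁, omitMap_zero_eq_assoc_inv_comp_proj₂]
  simp only [Subgroup.mem_inf, MonoidHom.mem_ker, hF, and_true]
  exact and_assoc

end

/-- For a constant-free group-valued functor `F`, the `n`-th cross-effect
`cr_nF(c₁,…,c_n)` equals the kernel of
`F(c₁ ⊙ ⋯ ⊙ c_n) → ∏ᵢ F(c₁ ⊙ ⋯ ⊙ ĉ_i ⊙ ⋯ ⊙ c_n)`. -/
theorem crG_eq_ker_omit (hT : IsTerminal (𝟙_ C)) (F : C ⥤ GrpCat)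
    (hF : ∀ x : F.obj (𝟙_ C), x = 1)
    (l : List C) (x : F.obj (listTensor l)) :
    x ∈ crG hT F l ↔ ∀ i : Fin l.length, F.map (omitMap hT l i) x = 1 := by
  match l with
  | [] => exact iff_of_true (by rw [crG]; exact Subgroup.mem_top x) nofun
  | [_] => exact iff_of_true (by rw [crG]; exact hF _) (Fin.cases (hF _) fun i => i.elim0)
  | c₁ :: c₂ :: l =>
    exact (mem_crG_cons_cons_iff hT F x hF).trans <|
      (and_congr_left' (crG_eq_ker_omit hT F hF _ _)).trans
        (forall_map_omitMap_cons_cons_eq_one_iff hT F x).symm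
  termination_by l.length
end
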